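/- arXiv:1101.4224 — 2 statements merged into one kernel-verified Lean document; each statement's English description precedes it below -/
import Mathlib

section
/- Let F be an exponential field with infinite cyclic kernel in which 2 has a logarithm, i.e., there exists t ∈ F with E(t)=2. Then for x ∈ F: x ∈ ℤ if and only if x ∈ ℚ and there exists t ∈ F with E(t)=2 and E(x·t) ∈ ℚ. -/
/-!
If `x = m / n` in lowest terms and `E (x t) = r` is rational, then
`r ^ n = E (n x t) = E (m t) = 2 ^ m`. Comparing `2`-adic valuations gives `n ∣ m`, so `n = 1`.
-/

section ExpHom

variable {G K : Type*} [AddGroup G] [GroupWithZero K] {E : G → K}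

theorem exp_nsmul (hE0 : E 0 = 1) (hEadd : ∀ x y, E (x + y) = E x * E y) (n : ℕ) (y : G) :
    E (n • y) = E y ^ n := by
  induction n with
  | zero => simpa using hE0
  | succ n ih => rw [succ_nsmul, hEadd, ih, pow_succ]

theorem exp_neg (hE0 : E 0 = 1) (hEadd : ∀ x y, E (x + y) = E x * E y) (y : G) :
    E (-y) = (E y)⁻¹ :=
  eq_inv_of_mul_eq_one_right (by rw [← hEadd, add_neg_cancel, hE0])

theorem exp_zsmul (hE0 : E 0 = 1) (hEadd : ∀ x y, E (x + y) = E x * E y) (m : ℤ) (y : G) :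
    E (m • y) = E y ^ m := by
  rcases m with n | n
  · simpa using exp_nsmul hE0 hEadd n y
  · rw [negSucc_zsmul, exp_neg hE0 hEadd, exp_nsmul hE0 hEadd, zpow_negSucc]

end ExpHom

theorem eq_one_of_rat_pow_eq_prime_zpow {p : ℕ} [Fact p.Prime] {r : ℚ} {m : ℤ} {n : ℕ}
    (hcop : m.natAbs.Coprime n) (h : r ^ n = (p : ℚ) ^ m) : n = 1 := by
  have hval : (n : ℤ) * padicValRat p r = m := by
    rw [← padicValRat.pow, h, padicValRat.zpow, padicValRat.self (Fact.out : p.Prime).one_lt,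
      mul_one]
  have hdvd : n ∣ m.natAbs := Int.natCast_dvd.mp ⟨_, hval.symm⟩
  exact Nat.eq_one_of_dvd_coprimes hcop hdvd dvd_rfl

theorem laczkovich_def_of_int_general
    (F : Type*) [Field F] [CharZero F] (E : F → F)
    (hE0 : E 0 = 1) (hEadd : ∀ x y : F, E (x + y) = E x * E y)
    (hlog2 : ∃ t : F, E t = 2) :
    ∀ x : F, (∃ m : ℤ, x = (m : F)) ↔
      ((∃ q : ℚ, x = (q : F)) ∧ ∃ t : F, E t = 2 ∧ ∃ q : ℚ, E (x * t) = (q : F)) := by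
  intro x
  constructor
  · rintro ⟨m, rfl⟩
    obtain ⟨t, ht⟩ := hlog2
    refine ⟨⟨m, (Rat.cast_intCast m).symm⟩, t, ht, 2 ^ m, ?_⟩
    rw [← zsmul_eq_mul, exp_zsmul hE0 hEadd, ht]
    norm_num
  · rintro ⟨⟨q, rfl⟩, t, ht, r, hr⟩
    have hclear : q.den • ((q : F) * t) = q.num • t := by
      rw [nsmul_eq_mul, zsmul_eq_mul, ← mul_assoc]
      congr 1
      exact_mod_cast q.den_mul_eq_num
    have hpow : r ^ q.den = (2 : ℚ) ^ q.num := by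
      have : ((r ^ q.den : ℚ) : F) = ((2 ^ q.num : ℚ) : F) := by
        rw [Rat.cast_pow, ← hr, ← exp_nsmul hE0 hEadd, hclear, exp_zsmul hE0 hEadd, ht]
        norm_num
      exact_mod_cast this
    have hden : q.den = 1 := eq_one_of_rat_pow_eq_prime_zpow q.reduced (by exact_mod_cast hpow)
    exact ⟨q.num, by rw [← Rat.cast_intCast, Rat.coe_int_num_of_den_eq_one hden]⟩

/-- In an exponential field with infinite cyclic kernel in which 2 has a
logarithm, `x ∈ ℤ` iff `x ∈ ℚ` and there is `t` with `E t = 2` and `E (x t) ∈ ℚ`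
(Laczkovich's definition of ℤ). -/
theorem laczkovich_def_of_int
    (F : Type*) [Field F] [CharZero F] (E : F → F)
    (hE0 : E 0 = 1) (hEadd : ∀ x y : F, E (x + y) = E x * E y)
    (τ : F) (hτ : τ ≠ 0)
    (hker : ∀ x : F, E x = 1 ↔ ∃ m : ℤ, x = (m : F) * τ)
    (hlog2 : ∃ t : F, E t = 2) :
    ∀ x : F, (∃ m : ℤ, x = (m : F)) ↔
      ((∃ q : ℚ, x = (q : F)) ∧ ∃ t : F, E t = 2 ∧ ∃ q : ℚ, E (x * t) = (q : F)) :=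
  laczkovich_def_of_int_general F E hE0 hEadd hlog2
end

section
/- Let F be an exponential field satisfying the Schanuel condition. For X ⊆ F finite, define ecl(X) = {c ∈ F : etd(X ∪ {c}) = etd(X)}, where etd is the exponential transcendence degree. Then ecl is a closure operator on finite sets: X ⊆ ecl(X), and if X ⊆ Y then ecl(X) ⊆ ecl(Y), and moreover etd(X ∪ {c}) ∈ {etd(X), etd(X)+1} for every c ∈ F. -/
/-- The transcendence degree over ℚ of the field generated by `X ∪ E(X)`: the largest
size of an algebraically independent subset of `X ∪ E(X)`. -/
noncomputable def tdeg {F : Type*} [Field F] [CharZero F] [DecidableEq F] (E : F → F)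
    (X : Finset F) : ℕ :=
  sSup {n : ℕ | ∃ s : Finset F, (s : Set F) ⊆ (X : Set F) ∪ E '' (X : Set F) ∧
    s.card = n ∧ AlgebraicIndependent ℚ (Subtype.val : ↥(↑s : Set F) → F)}

/-- The ℚ-linear dimension of the span of `X`. -/
noncomputable def ldim {F : Type*} [Field F] [CharZero F] (X : Finset F) : ℕ :=
  Module.finrank ℚ (Submodule.span ℚ (X : Set F))

/-- The predimension function `δ(X) = trans.deg(X ∪ E(X)/ℚ) − lin.dim_ℚ(X)`. -/
noncomputable def pdelta {F : Type*} [Field F] [CharZero F] [DecidableEq F] (E : F → F)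
    (X : Finset F) : ℤ :=
  (tdeg E X : ℤ) - (ldim X : ℤ)

/-- The Schanuel condition, stated as `δ(X) ≥ 0` for every finite `X`. -/
def SchanuelCondition {F : Type*} [Field F] [CharZero F] [DecidableEq F] (E : F → F) : Prop :=
  ∀ X : Finset F, 0 ≤ pdelta E X

/-!
Transcendence degree over `ℚ` is the rank function of the algebraic matroid of `F`, hence
submodular. Adding elements of the `ℚ`-span of `X` changes neither `tdeg` (`E` of a `ℚ`-linear
combination is algebraic over the values of `E` on `X`) nor `ldim`, so two sets can be enlarged
without changing `δ` until their intersection spans the intersection of their spans; then `ldim`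
is modular and `δ` submodular, which makes `ecl` monotone. Finally `δ (insert c X) ≤ δ X + 1`,
since an element outside the span adds at most `c` and `E c` to the transcendence degree and one
to the linear dimension; hence `etd` grows by at most one.
-/

open AlgebraicIndependent Submodule

section AddChar

variable {A K : Type*} [AddCommGroup A] [Module ℚ A] [Field K] [CharZero K]

def AddChar.algebraicPreimage (ψ : AddChar A K) (R : Subalgebra ℚ K) : AddSubgroup A where
  carrier := {a | IsAlgebraic R (ψ a)}
  zero_mem' := by simpa using isAlgebraic_one
  add_mem' ha hb := by simpa [AddChar.map_add_eq_mul] using ha.mul hb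
  neg_mem' ha := by simpa [AddChar.map_neg_eq_inv] using ha.inv

theorem Rat.den_nsmul_smul (q : ℚ) (a : A) : q.den • q • a = q.num • a := by
  rw [← Nat.cast_smul_eq_nsmul ℚ, ← Int.cast_smul_eq_zsmul ℚ, smul_smul, Rat.den_mul_eq_num]

theorem AddChar.isAlgebraic_adjoin_image_of_mem_span (ψ : AddChar A K) {X : Set A} {w : A}
    (hw : w ∈ span ℚ X) : IsAlgebraic (Algebra.adjoin ℚ (ψ '' X)) (ψ w) := by
  let G := ψ.algebraicPreimage (Algebra.adjoin ℚ (ψ '' X))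
  refine span_induction (p := fun w _ ↦ w ∈ G) (fun x hx ↦ ?_) G.zero_mem
    (fun _ _ _ _ ↦ G.add_mem) (fun q y _ hy ↦ ?_) hw
  · exact isAlgebraic_algebraMap (⟨ψ x, Algebra.subset_adjoin ⟨x, hx, rfl⟩⟩ :
      Algebra.adjoin ℚ (ψ '' X))
  · refine IsAlgebraic.of_pow q.pos ?_
    rw [← AddChar.map_nsmul_eq_pow, Rat.den_nsmul_smul]
    exact G.zsmul_mem hy q.num

end AddChar

section Tdeg

variable {F : Type*} [Field F] [CharZero F] [DecidableEq F]

local notation "𝔐" => AlgebraicIndependent.matroid ℚ F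

theorem tdeg_eq_eRk (E : F → F) (X : Finset F) :
    (tdeg E X : ℕ∞) = (𝔐).eRk ((X : Set F) ∪ E '' X) := by
  set S := (X : Set F) ∪ E '' X
  have hS : S.Finite := X.finite_toSet.union (X.finite_toSet.image E)
  obtain ⟨I, hI⟩ := (𝔐).exists_isBasis' S
  obtain ⟨t, rfl⟩ := (hS.subset hI.subset).exists_finset_coe
  suffices IsGreatest {n : ℕ | ∃ s : Finset F, (s : Set F) ⊆ S ∧ s.card = n ∧
      AlgebraicIndependent ℚ (Subtype.val : ↥(↑s : Set F) → F)} t.card by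
    rw [tdeg, this.csSup_eq, ← hI.encard_eq_eRk, Set.encard_coe_eq_coe_finsetCard]
  refine ⟨⟨t, hI.subset, rfl, hI.indep⟩, ?_⟩
  rintro _ ⟨s, hsS, rfl, hs⟩
  have : (s : Set F).encard ≤ (t : Set F).encard :=
    hI.encard_eq_eRk ▸ (matroid_indep_iff.mpr hs).encard_le_eRk_of_subset hsS
  simpa using this

theorem tdeg_union_add_tdeg_inter_le (E : F → F) (X Y : Finset F) :
    tdeg E (X ∪ Y) + tdeg E (X ∩ Y) ≤ tdeg E X + tdeg E Y := by
  have hunion : ((X ∪ Y : Finset F) : Set F) ∪ E '' ↑(X ∪ Y) =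
      ((X : Set F) ∪ E '' X) ∪ ((Y : Set F) ∪ E '' Y) := by
    rw [Finset.coe_union, Set.image_union, Set.union_union_union_comm]
  have hinter : ((X ∩ Y : Finset F) : Set F) ∪ E '' ↑(X ∩ Y) ⊆
      ((X : Set F) ∪ E '' X) ∩ ((Y : Set F) ∪ E '' Y) := by
    rw [Finset.coe_inter]
    exact Set.union_subset
      (Set.inter_subset_inter Set.subset_union_left Set.subset_union_left)
      ((Set.image_inter_subset ..).trans
        (Set.inter_subset_inter Set.subset_union_right Set.subset_union_right))
  suffices (tdeg E (X ∪ Y) : ℕ∞) + tdeg E (X ∩ Y) ≤ tdeg E X + tdeg E Y by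
    exact_mod_cast this
  simp only [tdeg_eq_eRk, hunion]
  calc _ ≤ (𝔐).eRk (((X : Set F) ∪ E '' X) ∪ ((Y : Set F) ∪ E '' Y)) +
        (𝔐).eRk (((X : Set F) ∪ E '' X) ∩ ((Y : Set F) ∪ E '' Y)) := by
        gcongr; exact (𝔐).eRk_mono hinter
    _ ≤ _ := by rw [add_comm]; exact (𝔐).eRk_inter_add_eRk_union_le _ _

theorem tdeg_insert_le (E : F → F) (X : Finset F) (c : F) :
    tdeg E (insert c X) ≤ tdeg E X + 2 := by
  have hins : ((insert c X : Finset F) : Set F) ∪ E '' ↑(insert c X) =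
      insert c (insert (E c) ((X : Set F) ∪ E '' X)) := by
    rw [Finset.coe_insert, Set.image_insert_eq, Set.insert_union, Set.union_insert]
  suffices (tdeg E (insert c X) : ℕ∞) ≤ tdeg E X + 1 + 1 by exact_mod_cast this
  rw [tdeg_eq_eRk, tdeg_eq_eRk, hins]
  calc _ ≤ _ := (𝔐).eRk_insert_le_add_one _ _
    _ ≤ _ := by gcongr; exact (𝔐).eRk_insert_le_add_one _ _

theorem tdeg_union_of_subset_span (ψ : AddChar F F) {X W : Finset F}
    (hW : (W : Set F) ⊆ span ℚ (X : Set F)) : tdeg ψ (X ∪ W) = tdeg ψ X := by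
  set S := (X : Set F) ∪ ψ '' X
  have hWS : (W : Set F) ∪ ψ '' W ⊆ (𝔐).closure S := by
    rw [matroid_closure_eq]
    rintro w (hw | ⟨w, hw, rfl⟩) <;> rw [SetLike.mem_coe, Subalgebra.mem_algebraicClosure]
    · have : w ∈ Algebra.adjoin ℚ S :=
        Algebra.adjoin_mono Set.subset_union_left (Algebra.span_le_adjoin ℚ _ (hW hw))
      exact isAlgebraic_algebraMap (⟨_, this⟩ : Algebra.adjoin ℚ S)
    · exact (ψ.isAlgebraic_adjoin_image_of_mem_span (hW hw)).tower_top_of_subalgebra_le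
        (Algebra.adjoin_mono Set.subset_union_right)
  have hsub : ((X ∪ W : Finset F) : Set F) ∪ ψ '' ↑(X ∪ W) ⊆ (𝔐).closure S := by
    rw [Finset.coe_union, Set.image_union, Set.union_union_union_comm]
    exact Set.union_subset ((𝔐).subset_closure S) hWS
  suffices (tdeg ψ (X ∪ W) : ℕ∞) = tdeg ψ X by exact_mod_cast this
  rw [tdeg_eq_eRk, tdeg_eq_eRk]
  refine le_antisymm ?_ ((𝔐).eRk_mono ?_)
  · exact ((𝔐).eRk_mono hsub).trans ((𝔐).eRk_closure_eq S).le
  · rw [Finset.coe_union, Set.image_union]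
    exact Set.union_subset_union Set.subset_union_left Set.subset_union_left

end Tdeg

section Ldim

variable {F : Type*} [Field F] [CharZero F]

theorem exists_finset_span_eq_inf (X Y : Finset F) :
    ∃ W : Finset F, span ℚ (W : Set F) = span ℚ (X : Set F) ⊓ span ℚ (Y : Set F) :=
  (fg_iff_finiteDimensional _).2 (finiteDimensional_of_le inf_le_left)

variable [DecidableEq F]

theorem span_union_of_subset_span {X W : Finset F} (hW : (W : Set F) ⊆ span ℚ (X : Set F)) :
    span ℚ ((X ∪ W : Finset F) : Set F) = span ℚ (X : Set F) := by
  rw [Finset.coe_union, span_union, sup_eq_left.2 (span_le.2 hW)]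

theorem ldim_union_of_subset_span {X W : Finset F} (hW : (W : Set F) ⊆ span ℚ (X : Set F)) :
    ldim (X ∪ W) = ldim X := by
  rw [ldim, ldim, span_union_of_subset_span hW]

theorem ldim_insert_of_notMem_span {X : Finset F} {c : F} (hc : c ∉ span ℚ (X : Set F)) :
    ldim (insert c X) = ldim X + 1 := by
  have hc0 : c ≠ 0 := fun h ↦ hc (h ▸ zero_mem _)
  have := finrank_sup_add_finrank_inf_eq (span ℚ (X : Set F)) (span ℚ {c})
  rw [(disjoint_span_singleton_of_notMem hc).eq_bot, finrank_bot, finrank_span_singleton hc0,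
    ← span_union, Set.union_singleton, add_zero] at this
  rw [ldim, ldim, Finset.coe_insert, this]

theorem ldim_union_add_ldim_inter {X Y : Finset F}
    (h : span ℚ ((X ∩ Y : Finset F) : Set F) = span ℚ (X : Set F) ⊓ span ℚ (Y : Set F)) :
    ldim (X ∪ Y) + ldim (X ∩ Y) = ldim X + ldim Y := by
  rw [ldim, ldim, ldim, ldim, h, Finset.coe_union, span_union]
  exact finrank_sup_add_finrank_inf_eq _ _

end Ldim

section Pdelta

variable {F : Type*} [Field F] [CharZero F] [DecidableEq F]

theorem pdelta_union_of_subset_span (ψ : AddChar F F) {X W : Finset F}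
    (hW : (W : Set F) ⊆ span ℚ (X : Set F)) : pdelta ψ (X ∪ W) = pdelta ψ X := by
  rw [pdelta, pdelta, tdeg_union_of_subset_span ψ hW, ldim_union_of_subset_span hW]

theorem pdelta_insert_le (ψ : AddChar F F) (X : Finset F) (c : F) :
    pdelta ψ (insert c X) ≤ pdelta ψ X + 1 := by
  by_cases hc : c ∈ span ℚ (X : Set F)
  · rw [← Finset.union_singleton, pdelta_union_of_subset_span ψ (by simpa using hc)]
    omega
  · have := tdeg_insert_le ψ X c
    rw [pdelta, pdelta, ldim_insert_of_notMem_span hc]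
    omega

theorem pdelta_union_add_pdelta_inter_le (E : F → F) {X Y : Finset F}
    (h : span ℚ ((X ∩ Y : Finset F) : Set F) = span ℚ (X : Set F) ⊓ span ℚ (Y : Set F)) :
    pdelta E (X ∪ Y) + pdelta E (X ∩ Y) ≤ pdelta E X + pdelta E Y := by
  have htdeg := tdeg_union_add_tdeg_inter_le E X Y
  have hldim := ldim_union_add_ldim_inter h
  simp only [pdelta]
  omega

theorem exists_pdelta_eq_and_span_inter_eq (ψ : AddChar F F) (X Y : Finset F) :
    ∃ X' Y' : Finset F, X ⊆ X' ∧ Y ⊆ Y' ∧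
      pdelta ψ X' = pdelta ψ X ∧ pdelta ψ Y' = pdelta ψ Y ∧
      span ℚ ((X' ∩ Y' : Finset F) : Set F) =
        span ℚ (X' : Set F) ⊓ span ℚ (Y' : Set F) := by
  obtain ⟨W, hW⟩ := exists_finset_span_eq_inf X Y
  have hWX : (W : Set F) ⊆ span ℚ (X : Set F) := subset_span.trans (hW.trans_le inf_le_left)
  have hWY : (W : Set F) ⊆ span ℚ (Y : Set F) := subset_span.trans (hW.trans_le inf_le_right)
  refine ⟨X ∪ W, Y ∪ W, Finset.subset_union_left, Finset.subset_union_left,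
    pdelta_union_of_subset_span ψ hWX, pdelta_union_of_subset_span ψ hWY, ?_⟩
  refine le_antisymm (le_inf (span_mono ?_) (span_mono ?_)) ?_
  · exact Finset.coe_subset.2 Finset.inter_subset_left
  · exact Finset.coe_subset.2 Finset.inter_subset_right
  · rw [span_union_of_subset_span hWX, span_union_of_subset_span hWY, ← hW]
    exact span_mono (Finset.coe_subset.2
      (Finset.subset_inter Finset.subset_union_right Finset.subset_union_right))

end Pdelta

section Etd

variable {F : Type*} [Field F] [CharZero F] [DecidableEq F]

structure IsExpTranscendenceDegree (E : F → F) (etd : Finset F → ℤ) : Prop where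
  exists_eq_pdelta : ∀ X : Finset F, ∃ X₁ : Finset F, X ⊆ X₁ ∧ etd X = pdelta E X₁
  le_pdelta : ∀ X X₁ : Finset F, X ⊆ X₁ → etd X ≤ pdelta E X₁

namespace IsExpTranscendenceDegree

variable {E : F → F} {etd : Finset F → ℤ}

theorem mono (h : IsExpTranscendenceDegree E etd) {X Y : Finset F} (hXY : X ⊆ Y) :
    etd X ≤ etd Y := by
  obtain ⟨Y₁, hYY₁, hY₁⟩ := h.exists_eq_pdelta Y
  exact hY₁ ▸ h.le_pdelta X Y₁ (hXY.trans hYY₁)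

theorem insert_le {ψ : AddChar F F} (h : IsExpTranscendenceDegree ψ etd) (X : Finset F) (c : F) :
    etd (insert c X) ≤ etd X + 1 := by
  obtain ⟨X₁, hXX₁, hX₁⟩ := h.exists_eq_pdelta X
  calc etd (insert c X) ≤ pdelta ψ (insert c X₁) :=
        h.le_pdelta _ _ (Finset.insert_subset_insert c hXX₁)
    _ ≤ etd X + 1 := hX₁ ▸ pdelta_insert_le ψ X₁ c

/-- Submodularity of the predimension, applied to witnesses for `etd (insert c X)` and `etd Y`
whose intersection contains `X`. -/
theorem insert_eq_of_subset {ψ : AddChar F F} (h : IsExpTranscendenceDegree ψ etd)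
    {X Y : Finset F} (hXY : X ⊆ Y) {c : F} (hc : etd (insert c X) = etd X) :
    etd (insert c Y) = etd Y := by
  refine le_antisymm ?_ (h.mono (Finset.subset_insert c Y))
  obtain ⟨X₁, hXX₁, hX₁⟩ := h.exists_eq_pdelta (insert c X)
  obtain ⟨Y₁, hYY₁, hY₁⟩ := h.exists_eq_pdelta Y
  obtain ⟨X₂, Y₂, hX₁X₂, hY₁Y₂, hX₂, hY₂, hspan⟩ :=
    exists_pdelta_eq_and_span_inter_eq ψ X₁ Y₁
  have hunion : etd (insert c Y) ≤ pdelta ψ (X₂ ∪ Y₂) :=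
    h.le_pdelta _ _ (Finset.insert_subset
      (Finset.mem_union_left _ (hX₁X₂ (hXX₁ (Finset.mem_insert_self c X))))
      ((hYY₁.trans hY₁Y₂).trans Finset.subset_union_right))
  have hinter : etd X ≤ pdelta ψ (X₂ ∩ Y₂) :=
    h.le_pdelta _ _ (Finset.subset_inter ((Finset.subset_insert c X).trans (hXX₁.trans hX₁X₂))
      (hXY.trans (hYY₁.trans hY₁Y₂)))
  have := pdelta_union_add_pdelta_inter_le ψ hspan
  omega

end IsExpTranscendenceDegree

end Etd

theorem ecl_closure_operator_general
    (F : Type*) [Field F] [CharZero F] [DecidableEq F] (E : F → F)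
    (hE0 : E 0 = 1) (hEadd : ∀ x y : F, E (x + y) = E x * E y)
    (etd : Finset F → ℤ)
    (hattained : ∀ X : Finset F, ∃ X₁ : Finset F, X ⊆ X₁ ∧ etd X = pdelta E X₁)
    (hmin : ∀ X X₁ : Finset F, X ⊆ X₁ → etd X ≤ pdelta E X₁) :
    (∀ X : Finset F, ∀ x ∈ X, x ∈ {c : F | etd (insert c X) = etd X}) ∧
    (∀ X Y : Finset F, X ⊆ Y →
      {c : F | etd (insert c X) = etd X} ⊆ {c : F | etd (insert c Y) = etd Y}) ∧
    (∀ (X : Finset F) (c : F),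
      etd (insert c X) = etd X ∨ etd (insert c X) = etd X + 1) := by
  obtain ⟨ψ, rfl⟩ : ∃ ψ : AddChar F F, ⇑ψ = E := ⟨⟨E, hE0, hEadd⟩, rfl⟩
  have h : IsExpTranscendenceDegree ψ etd := ⟨hattained, hmin⟩
  refine ⟨fun X x hx ↦ by rw [Set.mem_ofPred_eq, Finset.insert_eq_of_mem hx],
    fun X Y hXY c ↦ h.insert_eq_of_subset hXY, fun X c ↦ ?_⟩
  have := h.mono (Finset.subset_insert c X)
  have := h.insert_le X c
  omega

/-- let `etd` be the exponential transcendence degree (the attained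
minimum of δ over finite supersets) and `ecl X = {c : etd (X ∪ {c}) = etd X}`. Then
`ecl` is a closure operator on finite sets: `X ⊆ ecl X`; `X ⊆ Y → ecl X ⊆ ecl Y`;
and moreover `etd (X ∪ {c}) ∈ {etd X, etd X + 1}` for every `c`. -/
theorem ecl_closure_operator
    (F : Type*) [Field F] [CharZero F] [DecidableEq F] (E : F → F)
    (hE0 : E 0 = 1) (hEadd : ∀ x y : F, E (x + y) = E x * E y)
    (hSC : SchanuelCondition E)
    (etd : Finset F → ℤ)
    (hattained : ∀ X : Finset F, ∃ X₁ : Finset F, X ⊆ X₁ ∧ etd X = pdelta E X₁)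
    (hmin : ∀ X X₁ : Finset F, X ⊆ X₁ → etd X ≤ pdelta E X₁) :
    (∀ X : Finset F, ∀ x ∈ X, x ∈ {c : F | etd (insert c X) = etd X}) ∧
    (∀ X Y : Finset F, X ⊆ Y →
      {c : F | etd (insert c X) = etd X} ⊆ {c : F | etd (insert c Y) = etd Y}) ∧
    (∀ (X : Finset F) (c : F),
      etd (insert c X) = etd X ∨ etd (insert c X) = etd X + 1) :=
  ecl_closure_operator_general F E hE0 hEadd etd hattained hmin
end
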